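/- Let p be a real form of degree 2d in n variables, and for each exponent ℓ of total degree 2d write a(p;ℓ) = (ℓ₁!⋯ℓₙ!/(2d)!)·coeff(p,ℓ). Let M_p be the symmetric matrix indexed by the exponents i of total degree d, with entries (M_p)_{i,j} = a(p; i+j). Then p lies in the dual cone (Σ_{n,2d}^k)*, i.e. [p, h²] ≥ 0 for every real form h of degree d with at most k monomials, if and only if every k×k principal submatrix of M_p (obtained by choosing any k exponents of total degree d) is positive semidefinite. -/

import Mathlib

open MvPolynomial Finset

/-- The Fischer inner product of two `n`-ary forms of degree `2d`. -/
noncomputable def fischer (n d : ℕ) (p q : MvPolynomial (Fin n) ℝ) : ℝ :=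
  ∑ i ∈ p.support ∪ q.support,
    (((∏ j, Nat.factorial (i j) : ℕ) : ℝ) / ((2 * d).factorial : ℝ)) *
      coeff i p * coeff i q

/-- The normalized coefficient `a(p;ℓ) = (ℓ₁!⋯ℓₙ!/(2d)!)·coeff(p,ℓ)` of a degree `2d` form. -/
noncomputable def acoef (n d : ℕ) (p : MvPolynomial (Fin n) ℝ) (ℓ : Fin n →₀ ℕ) : ℝ :=
  (((∏ j, Nat.factorial (ℓ j) : ℕ) : ℝ) / ((2 * d).factorial : ℝ)) * coeff ℓ p

/-!
For `h = ∑ₐ xₐ X^{eₐ}` one has `[p, h²] = ∑_{a,b} a(p; eₐ + e_b) xₐ x_b`, the quadratic form of the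
moment matrix `(a(p; eₐ + e_b))_{a,b}` at `x`; the exponents `eₐ` need not be distinct. Hence `[p, h²] ≥ 0`
for all `h` supported on `k` given monomials of degree `d` iff the corresponding `k × k` principal
submatrix is positive semidefinite. A form with at most `k` monomials is such an `h`, after padding its
support to `k` exponents by repeating one of them, and principal submatrices of a positive semidefinite
matrix are positive semidefinite.
-/

open Matrix

noncomputable def momentMatrix {ι : Type*} (n d : ℕ) (p : MvPolynomial (Fin n) ℝ)
    (e : ι → (Fin n →₀ ℕ)) : Matrix ι ι ℝ :=
  Matrix.of fun a b => acoef n d p (e a + e b)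

section Fischer

variable {n d : ℕ} (p : MvPolynomial (Fin n) ℝ)

theorem fischer_eq_sum_acoef_mul_coeff (q : MvPolynomial (Fin n) ℝ) :
    fischer n d p q = ∑ i ∈ p.support, acoef n d p i * coeff i q := by
  refine (sum_subset subset_union_left fun i _ hi => ?_).symm
  simp [notMem_support_iff.mp hi]

theorem fischer_sum {ι : Type*} (s : Finset ι) (q : ι → MvPolynomial (Fin n) ℝ) :
    fischer n d p (∑ a ∈ s, q a) = ∑ a ∈ s, fischer n d p (q a) := by
  simp only [fischer_eq_sum_acoef_mul_coeff, coeff_sum, mul_sum]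
  exact sum_comm

theorem fischer_monomial (i : Fin n →₀ ℕ) (r : ℝ) :
    fischer n d p (monomial i r) = acoef n d p i * r := by
  classical
  rw [fischer_eq_sum_acoef_mul_coeff]
  simp only [coeff_monomial, mul_ite, mul_zero, sum_ite_eq]
  split_ifs with hi
  · rfl
  · simp [acoef, notMem_support_iff.mp hi]

theorem fischer_sq_sum_monomial {ι : Type*} [Fintype ι] (e : ι → (Fin n →₀ ℕ)) (x : ι → ℝ) :
    fischer n d p ((∑ a, monomial (e a) (x a)) ^ 2) = x ⬝ᵥ (momentMatrix n d p e *ᵥ x) := by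
  rw [sq, sum_mul_sum]
  simp only [monomial_mul, fischer_sum, fischer_monomial, dotProduct, Matrix.mulVec,
    momentMatrix, Matrix.of_apply, mul_sum]
  exact sum_congr rfl fun a _ => sum_congr rfl fun b _ => by ring

end Fischer

section MomentMatrix

variable {ι : Type*} {n d : ℕ} (p : MvPolynomial (Fin n) ℝ) (e : ι → (Fin n →₀ ℕ))

theorem momentMatrix_isHermitian : (momentMatrix n d p e).IsHermitian := by
  ext a b
  simp [momentMatrix, add_comm]

theorem momentMatrix_comp {κ : Type*} (f : κ → ι) :
    momentMatrix n d p (e ∘ f) = (momentMatrix n d p e).submatrix f f :=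
  rfl

theorem posSemidef_momentMatrix_iff [Fintype ι] :
    (momentMatrix n d p e).PosSemidef ↔
      ∀ x : ι → ℝ, 0 ≤ fischer n d p ((∑ a, monomial (e a) (x a)) ^ 2) := by
  simp only [fischer_sq_sum_monomial, Matrix.posSemidef_iff_dotProduct_mulVec, star_trivial,
    momentMatrix_isHermitian, true_and]

end MomentMatrix

theorem isHomogeneous_sum_monomial {ι : Type*} [Fintype ι] {n d : ℕ} {e : ι → (Fin n →₀ ℕ)}
    (he : ∀ a, ∑ j, e a j = d) (x : ι → ℝ) :
    (∑ a, monomial (e a) (x a)).IsHomogeneous d :=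
  IsHomogeneous.sum _ _ _ fun a _ =>
    isHomogeneous_monomial _ (by rw [Finsupp.degree_eq_sum, he])

theorem card_support_sum_monomial_le {ι : Type*} [Fintype ι] {n : ℕ} (e : ι → (Fin n →₀ ℕ))
    (x : ι → ℝ) : (∑ a, monomial (e a) (x a)).support.card ≤ Fintype.card ι := by
  classical
  calc (∑ a, monomial (e a) (x a)).support.card
      ≤ (univ.biUnion fun a => (monomial (e a) (x a)).support).card :=
        card_le_card support_sum
    _ ≤ ∑ a, (monomial (e a) (x a)).support.card := card_biUnion_le
    _ ≤ ∑ _a : ι, 1 := sum_le_sum fun a _ =>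
        (card_le_card support_monomial_subset).trans (card_singleton _).le
    _ = Fintype.card ι := by simp

theorem MvPolynomial.IsHomogeneous.sum_apply_of_mem_support {n d : ℕ}
    {h : MvPolynomial (Fin n) ℝ} (hh : h.IsHomogeneous d) {i : Fin n →₀ ℕ} (hi : i ∈ h.support) :
    ∑ j, i j = d := by
  rw [← Finsupp.degree_eq_sum, Finsupp.degree_eq_weight_one]
  exact hh (mem_support_iff.mp hi)

theorem dual_cone_iff_principal_submatrices_psd (n d k : ℕ)
    (p : MvPolynomial (Fin n) ℝ) :
    (∀ h : MvPolynomial (Fin n) ℝ, h.IsHomogeneous d → h.support.card ≤ k →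
        0 ≤ fischer n d p (h ^ 2)) ↔
    (∀ e : Fin k → (Fin n →₀ ℕ), (∀ a, ∑ j, e a j = d) →
        (Matrix.of fun a b : Fin k => acoef n d p (e a + e b)).PosSemidef) := by
  refine ⟨fun H e he => (posSemidef_momentMatrix_iff p e).2 fun x =>
    H _ (isHomogeneous_sum_monomial he x)
      ((card_support_sum_monomial_le e x).trans (Fintype.card_fin k).le), fun H h hh hk => ?_⟩
  obtain rfl | ⟨i₀, hi₀⟩ := h.support.eq_empty_or_nonempty.imp_left support_eq_empty.mp
  · simp [fischer]
  obtain ⟨ι⟩ := Function.Embedding.nonempty_of_card_le (α := h.support) (β := Fin k) (by simpa)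
  have he : ∀ a, ∑ j, Function.extend ι Subtype.val (fun _ => i₀) a j = d := by
    intro a
    obtain ⟨i, hi⟩ | ⟨_, -, hi⟩ := Set.range_extend_subset ι Subtype.val _ ⟨a, rfl⟩
    · exact hi ▸ hh.sum_apply_of_mem_support i.2
    · exact hi ▸ hh.sum_apply_of_mem_support hi₀
  have hpsd : (momentMatrix n d p (Subtype.val : h.support → _)).PosSemidef := by
    rw [← Function.extend_comp ι.injective Subtype.val fun _ => i₀, momentMatrix_comp]
    exact (H _ he).submatrix ι
  have := (posSemidef_momentMatrix_iff p _).1 hpsd fun i => coeff i h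
  rwa [sum_coe_sort h.support fun i => monomial i (coeff i h), support_sum_monomial_coeff] at this
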